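/- (Theorem 1, column eigenvector part.) Under assumption A1 with parameter θ ≥ 0, the function u*(x) = ∑_{n≥1} e^{θn}·f_n(x) is strictly positive and finite for every x ∈ S, and satisfies ∑_{y∈S} B(x,y)·u*(y) = λ*·u*(x) for every x ∈ S, where λ* = e^{-θ}; moreover u*(z) = 1. -/

import Mathlib

/-- Matrix powers: `B^0 = I`, `B^{n+1}(x,y) = ∑_w B^n(x,w) B(w,y)`. -/
noncomputable def matPow {S : Type*} [DecidableEq S] (B : S → S → ℝ) : ℕ → S → S → ℝ
  | 0 => fun x y => if x = y then (1 : ℝ) else 0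
  | n + 1 => fun x y => ∑' w, matPow B n x w * B w y

/-- First-return quantities: `fret B z n x` is the probability that the killed chain
with sub-stochastic transition matrix `B`, started at `x`, first hits `z` at time `n`
without having been killed: `f_1(x) = B(x,z)`, `f_{n+1}(x) = ∑_{w ≠ z} B(x,w) f_n(w)`.
(The value at `n = 0` is set to `0` by convention.) -/
noncomputable def fret {S : Type*} [DecidableEq S] (B : S → S → ℝ) (z : S) : ℕ → S → ℝ
  | 0 => fun _ => 0
  | 1 => fun x => B x z
  | n + 2 => fun x => ∑' w, if w = z then 0 else B x w * fret B z (n + 1) w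

/-- `grow B z j y` is the probability that the killed chain started at `z` is at `y`
at time `j` without having been killed or having returned to `z`:
`g_0 = δ_z`, and for `j ≥ 1`, `g_j(z) = 0` and `g_j(y) = ∑_x g_{j-1}(x) B(x,y)` for `y ≠ z`. -/
noncomputable def grow {S : Type*} [DecidableEq S] (B : S → S → ℝ) (z : S) : ℕ → S → ℝ
  | 0 => fun y => if y = z then 1 else 0
  | j + 1 => fun y => if y = z then 0 else ∑' x, grow B z j x * B x y

/-- The Perron-Frobenius column eigenvector candidate
`u*(x) = ∑_{n ≥ 1} e^{θ n} f_n(x)`. -/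
noncomputable def uStar {S : Type*} [DecidableEq S] (B : S → S → ℝ) (z : S) (θ : ℝ)
    (x : S) : ℝ :=
  ∑' n : ℕ, Real.exp (θ * ((n : ℝ) + 1)) * fret B z (n + 1) x

/-- The Perron-Frobenius row eigenvector candidate
`η*(y) = ∑_{j ≥ 0} e^{θ j} g_j(y)`. -/
noncomputable def etaStar {S : Type*} [DecidableEq S] (B : S → S → ℝ) (z : S) (θ : ℝ)
    (y : S) : ℝ :=
  ∑' j : ℕ, Real.exp (θ * (j : ℝ)) * grow B z j y

/-!
Splitting off the first step gives `∑_y B(x,y) f_{n+1}(y) = B(x,z) f_{n+1}(z) + f_{n+2}(x)`;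
weighting by `e^{θ(n+1)}`, summing over `n` and using `u*(z) = 1` yields `B u* = e^{-θ} u*`.
Since `f_{n+2}(x) ≥ B(x,v) f_{n+1}(v)` for `v ≠ z`, finiteness of `u*` propagates from `z` along
edges of `B`, while the eigen-equation propagates positivity backwards along edges into `z`;
irreducibility lets both reach every state.
-/

open Real

theorem hasSum_tsum_comm_of_nonneg {α β : Type*} {F : α → β → ℝ} {s : ℝ}
    (hF0 : ∀ a b, 0 ≤ F a b) (hF : ∀ a, Summable (F a))
    (hs : HasSum (fun a => ∑' b, F a b) s) :
    HasSum (fun b => ∑' a, F a b) s := by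
  have hu : Summable (Function.uncurry F) :=
    (summable_prod_of_nonneg fun p => hF0 p.1 p.2).2 ⟨hF, hs.summable⟩
  have htot : HasSum (Function.uncurry F) s :=
    (hu.tsum_prod' hF).trans hs.tsum_eq ▸ hu.hasSum
  exact ((Equiv.prodComm β α).hasSum_iff.2 htot).prod_fiberwise fun b =>
    (hu.prod_symm.prod_factor b).hasSum

theorem summable_mul_of_le_one {S : Type*} {B : S → S → ℝ} (hnn : ∀ x y, 0 ≤ B x y)
    (hrow : ∀ x, Summable (fun y => B x y)) {g : S → ℝ} (hg0 : ∀ y, 0 ≤ g y)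
    (hg1 : ∀ y, g y ≤ 1) (x : S) : Summable fun y => B x y * g y :=
  (hrow x).of_nonneg_of_le (fun y => mul_nonneg (hnn x y) (hg0 y))
    fun y => mul_le_of_le_one_right (hnn x y) (hg1 y)

theorem reflTransGen_of_matPow_ne_zero {S : Type*} [DecidableEq S] {B : S → S → ℝ} {n : ℕ}
    {x y : S} (h : matPow B n x y ≠ 0) :
    Relation.ReflTransGen (fun a b => B a b ≠ 0) x y := by
  induction n generalizing y with
  | zero =>
    obtain rfl : x = y := by by_contra hxy; simp [matPow, hxy] at h
    exact .refl
  | succ n ih =>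
    obtain ⟨w, hw⟩ : ∃ w, matPow B n x w * B w y ≠ 0 := by
      by_contra! h'
      simp [matPow, h'] at h
    exact (ih (left_ne_zero_of_mul hw)).tail (right_ne_zero_of_mul hw)

section FirstReturn

variable {S : Type*} [DecidableEq S] {B : S → S → ℝ} {z : S}

theorem fret_nonneg (hnn : ∀ x y, 0 ≤ B x y) : ∀ n x, 0 ≤ fret B z n x
  | 0, _ => le_rfl
  | 1, x => hnn x z
  | n + 2, x => tsum_nonneg fun w => by
      split_ifs
      exacts [le_rfl, mul_nonneg (hnn x w) (fret_nonneg hnn (n + 1) w)]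

theorem tsum_mul_fret {x : S} {n : ℕ}
    (hs : Summable fun w => B x w * fret B z (n + 1) w) :
    ∑' w, B x w * fret B z (n + 1) w = B x z * fret B z (n + 1) z + fret B z (n + 2) x := by
  rw [hs.tsum_eq_add_tsum_ite z]
  rfl

variable (hnn : ∀ x y, 0 ≤ B x y) (hrow : ∀ x, Summable (fun y => B x y))
  (hsub : ∀ x, ∑' y, B x y ≤ 1)
include hnn hrow hsub

theorem fret_le_one : ∀ n x, fret B z n x ≤ 1
  | 0, _ => zero_le_one
  | 1, x => ((hrow x).le_tsum z fun y _ => hnn x y).trans (hsub x)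
  | n + 2, x => by
      have hs := summable_mul_of_le_one hnn hrow (fret_nonneg hnn (n + 1))
        (fret_le_one (n + 1)) x
      have hz : 0 ≤ B x z * fret B z (n + 1) z := mul_nonneg (hnn x z) (fret_nonneg hnn _ z)
      calc fret B z (n + 2) x ≤ ∑' w, B x w * fret B z (n + 1) w := by
            rw [tsum_mul_fret hs]; linarith
        _ ≤ ∑' w, B x w :=
            hs.tsum_le_tsum (fun w => mul_le_of_le_one_right (hnn x w) (fret_le_one _ w)) (hrow x)
        _ ≤ 1 := hsub x

theorem summable_mul_fret (n : ℕ) (x : S) : Summable fun w => B x w * fret B z n w :=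
  summable_mul_of_le_one hnn hrow (fret_nonneg hnn n) (fret_le_one hnn hrow hsub n) x

theorem mul_fret_le_fret_succ {x v : S} (hv : v ≠ z) (n : ℕ) :
    B x v * fret B z (n + 1) v ≤ fret B z (n + 2) x := by
  have hterm (w : S) : 0 ≤ B x w * fret B z (n + 1) w :=
    mul_nonneg (hnn x w) (fret_nonneg hnn _ w)
  have hs : Summable fun w => if w = z then 0 else B x w * fret B z (n + 1) w :=
    (summable_mul_fret hnn hrow hsub (n + 1) x).of_nonneg_of_le
      (fun w => ite_nonneg le_rfl (hterm w)) fun w => by split_ifs; exacts [hterm w, le_rfl]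
  have h := hs.le_tsum v fun w _ => ite_nonneg le_rfl (hterm w)
  rwa [if_neg hv] at h

end FirstReturn

noncomputable def uStarTerm {S : Type*} [DecidableEq S] (B : S → S → ℝ) (z : S) (θ : ℝ)
    (x : S) (n : ℕ) : ℝ :=
  exp (θ * ((n : ℝ) + 1)) * fret B z (n + 1) x

section ColumnEigenvector

variable {S : Type*} [DecidableEq S] {B : S → S → ℝ} {z : S} {θ : ℝ}

theorem exp_neg_mul_uStarTerm_succ (x : S) (n : ℕ) :
    exp (-θ) * uStarTerm B z θ x (n + 1) = exp (θ * ((n : ℝ) + 1)) * fret B z (n + 2) x := by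
  rw [uStarTerm, ← mul_assoc, ← exp_add]
  push_cast
  ring_nf

variable (hnn : ∀ x y, 0 ≤ B x y) (hrow : ∀ x, Summable (fun y => B x y))
  (hsub : ∀ x, ∑' y, B x y ≤ 1)
include hnn

theorem uStarTerm_nonneg (x : S) (n : ℕ) : 0 ≤ uStarTerm B z θ x n :=
  mul_nonneg (exp_nonneg _) (fret_nonneg hnn _ x)

theorem uStar_nonneg (x : S) : 0 ≤ uStar B z θ x :=
  tsum_nonneg (uStarTerm_nonneg hnn x)

theorem uStar_pos_of_reflTransGen
    (heig : ∀ a, HasSum (fun y => B a y * uStar B z θ y) (exp (-θ) * uStar B z θ a))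
    (hz : 0 < uStar B z θ z) {x : S} (h : Relation.ReflTransGen (fun a b => B a b ≠ 0) x z) :
    0 < uStar B z θ x := by
  induction h using Relation.ReflTransGen.head_induction_on with
  | refl => exact hz
  | @head a b hB _ ih =>
    have hle : B a b * uStar B z θ b ≤ exp (-θ) * uStar B z θ a :=
      le_hasSum (heig a) b fun y _ => mul_nonneg (hnn a y) (uStar_nonneg hnn y)
    exact pos_of_mul_pos_right ((mul_pos ((hnn a b).lt_of_ne' hB) ih).trans_le hle) (exp_nonneg _)

include hrow hsub

theorem summable_uStarTerm_of_ne_zero {x v : S} (hx : Summable (uStarTerm B z θ x))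
    (hv : v ≠ z) (hB : B x v ≠ 0) : Summable (uStarTerm B z θ v) := by
  have hBpos : 0 < B x v := (hnn x v).lt_of_ne' hB
  refine ((summable_nat_add_iff 1).2 hx |>.mul_left (exp (-θ) / B x v)).of_nonneg_of_le
    (uStarTerm_nonneg hnn v) fun n => ?_
  rw [div_mul_eq_mul_div, le_div_iff₀ hBpos, exp_neg_mul_uStarTerm_succ, uStarTerm, mul_assoc]
  exact mul_le_mul_of_nonneg_left
    (by rw [mul_comm]; exact mul_fret_le_fret_succ hnn hrow hsub hv n) (exp_nonneg _)

theorem summable_uStarTerm_of_reflTransGen {x : S}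
    (h : Relation.ReflTransGen (fun a b => B a b ≠ 0) z x)
    (hz : Summable (uStarTerm B z θ z)) : Summable (uStarTerm B z θ x) := by
  induction h with
  | refl => exact hz
  | @tail v w _ hB ih =>
    by_cases hw : w = z
    · exact hw ▸ hz
    · exact summable_uStarTerm_of_ne_zero hnn hrow hsub ih hw hB

theorem hasSum_mul_uStar (hsum : ∀ x, Summable (uStarTerm B z θ x)) (hz : uStar B z θ z = 1)
    (x : S) : HasSum (fun y => B x y * uStar B z θ y) (exp (-θ) * uStar B z θ x) := by
  have hrowsum : ∀ n : ℕ, ∑' y, exp (θ * ((n : ℝ) + 1)) * (B x y * fret B z (n + 1) y)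
      = B x z * uStarTerm B z θ z n + exp (-θ) * uStarTerm B z θ x (n + 1) := by
    intro n
    rw [tsum_mul_left, tsum_mul_fret (summable_mul_fret hnn hrow hsub _ x),
      exp_neg_mul_uStarTerm_succ, uStarTerm]
    ring
  have hz' : HasSum (uStarTerm B z θ z) 1 := by rw [← hz]; exact (hsum z).hasSum
  have htail : HasSum (fun n => uStarTerm B z θ x (n + 1)) (uStar B z θ x - exp θ * B x z) := by
    have h0 : uStarTerm B z θ x 0 = exp θ * B x z := by simp [uStarTerm, fret]
    have := (hasSum_nat_add_iff' 1).2 (hsum x).hasSum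
    rwa [Finset.sum_range_one, h0] at this
  have hrows : HasSum
      (fun n : ℕ => ∑' y, exp (θ * ((n : ℝ) + 1)) * (B x y * fret B z (n + 1) y))
      (exp (-θ) * uStar B z θ x) := by
    have hval : B x z * 1 + exp (-θ) * (uStar B z θ x - exp θ * B x z)
        = exp (-θ) * uStar B z θ x := by
      rw [mul_sub, ← mul_assoc, ← exp_add, neg_add_cancel, exp_zero]
      ring
    simp only [hrowsum, ← hval]
    exact (hz'.mul_left _).add (htail.mul_left _)
  have := hasSum_tsum_comm_of_nonneg
    (F := fun (n : ℕ) y => exp (θ * ((n : ℝ) + 1)) * (B x y * fret B z (n + 1) y))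
    (fun n y => mul_nonneg (exp_nonneg _) (mul_nonneg (hnn x y) (fret_nonneg hnn _ y)))
    (fun n => (summable_mul_fret hnn hrow hsub _ x).mul_left _) hrows
  simp only [mul_left_comm _ (B x _), tsum_mul_left] at this
  exact this

end ColumnEigenvector

theorem stmt4 {S : Type*} [DecidableEq S]
    (B : S → S → ℝ)
    (hnn : ∀ x y, 0 ≤ B x y)
    (hrow : ∀ x, Summable (fun y => B x y))
    (hsub : ∀ x, ∑' y, B x y ≤ 1)
    (hirr : ∀ x y, ∃ n, 1 ≤ n ∧ 0 < matPow B n x y)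
    (z : S) (θ : ℝ)
    (hA1 : ∑' n : ℕ, Real.exp (θ * ((n : ℝ) + 1)) * fret B z (n + 1) z = 1) :
    (∀ x, Summable (fun n : ℕ => Real.exp (θ * ((n : ℝ) + 1)) * fret B z (n + 1) x)) ∧
    (∀ x, 0 < uStar B z θ x) ∧
    (∀ x, ∑' y, B x y * uStar B z θ y = Real.exp (-θ) * uStar B z θ x) ∧
    uStar B z θ z = 1 := by
  have hu : uStar B z θ z = 1 := hA1
  have hreach (x y : S) : Relation.ReflTransGen (fun a b => B a b ≠ 0) x y :=
    have ⟨_, _, h⟩ := hirr x y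
    reflTransGen_of_matPow_ne_zero h.ne'
  have hz : Summable (uStarTerm B z θ z) := by
    by_contra h
    exact zero_ne_one ((tsum_eq_zero_of_not_summable h).symm.trans hA1)
  have hsum (x : S) := summable_uStarTerm_of_reflTransGen hnn hrow hsub (hreach z x) hz
  have heig := hasSum_mul_uStar hnn hrow hsub hsum hu
  exact ⟨hsum, fun x => uStar_pos_of_reflTransGen hnn heig (hu ▸ one_pos) (hreach x z),
    fun x => (heig x).tsum_eq, hu⟩
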